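/- arXiv:2102.02776 — 3 statements merged into one kernel-verified Lean document; each statement's English description precedes it below -/
import Mathlib

section
/- Let (R, I) be a pseudo-adhesive pair and M an FP-approximated R-module. Then the I-power torsion of M is bounded: there exists n ≥ 0 such that M[I^∞] = M[I^n], i.e. every element of M annihilated by some power of I is annihilated by I^n. -/
/-!
Let `φ : G → M` have kernel and cokernel killed by `I ^ n`, with `G` finite, so that `I ^ m`
kills the `I`-power torsion of `G`. If `x ∈ M` is `I`-power torsion and `a ∈ I ^ n`, then
`a • x = φ y` for some `y`, and `y` is again `I`-power torsion: `I ^ k` kills `φ y`, hence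
`I ^ n * I ^ k` kills `y`. So `I ^ m` kills `y`, and `I ^ m * I ^ n` kills `x`.
-/

open CategoryTheory AlgebraicGeometry Opposite Limits

universe w v u

set_option maxHeartbeats 1000000
set_option synthInstance.maxHeartbeats 400000

noncomputable section

/-- The open complement of the vanishing locus `V(I)` inside `Spec R`. -/
def specComplementZeroLocus (R : Type u) [CommRing R] (I : Ideal R) :
    (Spec (CommRingCat.of R)).Opens :=
  ⟨(PrimeSpectrum.zeroLocus (I : Set R))ᶜ,
    (PrimeSpectrum.isClosed_zeroLocus (I : Set R)).isOpen_compl⟩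

/-- An `R`-module `M` has bounded `I`-power torsion: there is `n ≥ 0` such that every
element killed by some power of `I` is killed by `I ^ n`. -/
def Module.HasBoundedTorsion (R : Type u) [CommRing R] (I : Ideal R)
    (M : Type v) [AddCommGroup M] [Module R M] : Prop :=
  ∃ n : ℕ, ∀ x : M, (∃ k : ℕ, ∀ a ∈ I ^ k, a • x = 0) → ∀ a ∈ I ^ n, a • x = 0

/-- `(R, I)` is a pseudo-adhesive pair: `I` is finitely generated, `Spec R ∖ V(I)` is a
noetherian scheme, and every finite `R`-module has bounded `I`-power torsion. -/
structure IsPseudoAdhesivePair (R : Type u) [CommRing R] (I : Ideal R) : Prop where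
  fg : I.FG
  isNoetherian : AlgebraicGeometry.IsNoetherian (specComplementZeroLocus R I).toScheme
  boundedTorsion : ∀ (M : Type u) [AddCommGroup M] [Module R M],
    Module.Finite R M → Module.HasBoundedTorsion R I M

/-- `(R, I)` is universally pseudo-adhesive if `(R[X₁, …, X_d], I·R[X₁, …, X_d])` is
pseudo-adhesive for every `d ≥ 0`. -/
def IsUnivPseudoAdhesivePair (R : Type u) [CommRing R] (I : Ideal R) : Prop :=
  ∀ d : ℕ, IsPseudoAdhesivePair (MvPolynomial (Fin d) R)
    (I.map (MvPolynomial.C : R →+* MvPolynomial (Fin d) R))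

/-- An `R`-module `M` is FP-approximated with respect to `I` if there are a finitely
presented `R`-module `G`, a linear map `φ : G →ₗ[R] M` and `n ≥ 0` such that `I ^ n`
annihilates both the kernel and the cokernel of `φ`. -/
def Module.IsFPApproximated (R : Type u) [CommRing R] (I : Ideal R)
    (M : Type v) [AddCommGroup M] [Module R M] : Prop :=
  ∃ (G : Type v) (_ : AddCommGroup G) (_ : Module R G) (φ : G →ₗ[R] M) (n : ℕ),
    Module.FinitePresentation R G ∧
    (∀ a ∈ I ^ n, ∀ x : G, φ x = 0 → a • x = 0) ∧
    (∀ a ∈ I ^ n, ∀ y : M, a • y ∈ LinearMap.range φ)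

section BoundedTorsion

variable {R : Type u} [CommRing R] {I : Ideal R}
  {M : Type v} [AddCommGroup M] [Module R M] {N : Type w} [AddCommGroup N] [Module R N]

theorem smul_eq_zero_of_mem_mul {J K : Ideal R} {x : M}
    (h : ∀ a ∈ J, ∀ b ∈ K, a • b • x = 0) : ∀ c ∈ J * K, c • x = 0 := by
  have hle : J * K ≤ (R ∙ x).annihilator := Ideal.mul_le.2 fun a ha b hb =>
    (Submodule.mem_annihilator_span_singleton _ _).2 (by rw [mul_smul]; exact h a ha b hb)
  exact fun c hc => (Submodule.mem_annihilator_span_singleton _ _).1 (hle hc)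

theorem Module.HasBoundedTorsion.of_injective (f : M →ₗ[R] N) (hf : Function.Injective f)
    (h : Module.HasBoundedTorsion R I N) : Module.HasBoundedTorsion R I M := by
  obtain ⟨n, hn⟩ := h
  refine ⟨n, fun x ⟨k, hk⟩ a ha => hf ?_⟩
  rw [map_smul, map_zero]
  exact hn (f x) ⟨k, fun b hb => by rw [← map_smul, hk b hb, map_zero]⟩ a ha

/-- `boundedTorsion` only covers modules in the universe of `R`, so we pass through a quotient
of `Fin m → R`. -/
theorem IsPseudoAdhesivePair.hasBoundedTorsion_of_finite (hRI : IsPseudoAdhesivePair R I)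
    [Module.Finite R M] : Module.HasBoundedTorsion R I M := by
  obtain ⟨m, f, hf⟩ := Module.Finite.exists_fin' R M
  exact (hRI.boundedTorsion _ inferInstance).of_injective
    (f.quotKerEquivOfSurjective hf).symm.toLinearMap (LinearEquiv.injective _)

theorem smul_eq_zero_of_apply_eq_smul (φ : N →ₗ[R] M) {n k : ℕ}
    (hker : ∀ a ∈ I ^ n, ∀ y : N, φ y = 0 → a • y = 0) {x : M} (hx : ∀ a ∈ I ^ k, a • x = 0)
    {y : N} {c : R} (hy : φ y = c • x) : ∀ a ∈ I ^ (n + k), a • y = 0 := by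
  rw [pow_add]
  refine smul_eq_zero_of_mem_mul fun a ha b hb => hker a ha _ ?_
  rw [map_smul, hy, smul_comm, hx b hb, smul_zero]

theorem Module.HasBoundedTorsion.of_linearMap (φ : N →ₗ[R] M) {n : ℕ}
    (hker : ∀ a ∈ I ^ n, ∀ y : N, φ y = 0 → a • y = 0)
    (hcoker : ∀ a ∈ I ^ n, ∀ x : M, a • x ∈ LinearMap.range φ)
    (h : Module.HasBoundedTorsion R I N) : Module.HasBoundedTorsion R I M := by
  obtain ⟨m, hm⟩ := h
  refine ⟨m + n, fun x ⟨k, hk⟩ => ?_⟩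
  rw [pow_add]
  refine smul_eq_zero_of_mem_mul fun b hb a ha => ?_
  obtain ⟨y, hy⟩ := hcoker a ha x
  rw [← hy, ← map_smul, hm y ⟨n + k, smul_eq_zero_of_apply_eq_smul φ hker hk hy⟩ b hb, map_zero]

end BoundedTorsion

/-- Let `(R, I)` be a pseudo-adhesive pair and `M` an FP-approximated
`R`-module. Then the `I`-power torsion of `M` is bounded: there exists `n ≥ 0` such that
every element of `M` annihilated by some power of `I` is annihilated by `I ^ n`. -/
theorem boundedTorsion_of_isFPApproximated
    (R : Type u) [CommRing R] (I : Ideal R) (hRI : IsPseudoAdhesivePair R I)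
    (M : Type v) [AddCommGroup M] [Module R M] (hM : Module.IsFPApproximated R I M) :
    ∃ n : ℕ, ∀ x : M, (∃ k : ℕ, ∀ a ∈ I ^ k, a • x = 0) → ∀ a ∈ I ^ n, a • x = 0 := by
  obtain ⟨G, _, _, φ, n, _, hker, hcoker⟩ := hM
  exact hRI.hasBoundedTorsion_of_finite.of_linearMap φ hker hcoker

end
end

section
/- Let (R, I) be a universally pseudo-adhesive pair and S a finite type R-algebra. Then the pair (S, I·S) is universally pseudo-adhesive. -/
open CategoryTheory AlgebraicGeometry Opposite Limits

universe w v u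

set_option maxHeartbeats 1000000
set_option synthInstance.maxHeartbeats 400000

noncomputable section

/-!
Over a finite type `R`-algebra `S`, the ring `S[X₁, …, X_d]` is a quotient of some
`R[X₁, …, X_m]`, so it suffices that pseudo-adhesiveness passes along finite ring maps
`A → B`. The punctured spectrum of `B` is of finite type and quasi-compact over that of `A`,
hence noetherian, and a finite `B`-module is a finite `A`-module whose `J`-power torsion and
`JB`-power torsion coincide.
-/

lemma AlgebraicGeometry.IsNoetherian.of_locallyOfFiniteType {X Y : Scheme.{u}} (f : X ⟶ Y)
    [LocallyOfFiniteType f] [QuasiCompact f] [IsNoetherian Y] : IsNoetherian X :=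
  { toIsLocallyNoetherian := LocallyOfFiniteType.isLocallyNoetherian f
    toCompactSpace := QuasiCompact.compactSpace_of_compactSpace f }

lemma preimage_specComplementZeroLocus {A B : Type u} [CommRing A] [CommRing B] (f : A →+* B)
    (J : Ideal A) :
    Spec.map (CommRingCat.ofHom f) ⁻¹ᵁ specComplementZeroLocus A J =
      specComplementZeroLocus B (J.map f) := by
  ext1
  simp only [specComplementZeroLocus, Ideal.map, PrimeSpectrum.zeroLocus_span]
  exact congrArg compl (PrimeSpectrum.preimage_comap_zeroLocus f J)

lemma isNoetherian_specComplementZeroLocus_map {A B : Type u} [CommRing A] [CommRing B]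
    {f : A →+* B} (hf : f.FiniteType) {J : Ideal A}
    (h : IsNoetherian (specComplementZeroLocus A J).toScheme) :
    IsNoetherian (specComplementZeroLocus B (J.map f)).toScheme := by
  have : LocallyOfFiniteType (Spec.map (CommRingCat.ofHom f)) :=
    HasRingHomProperty.Spec_iff.mpr hf
  rw [← preimage_specComplementZeroLocus]
  exact .of_locallyOfFiniteType (Spec.map (CommRingCat.ofHom f) ∣_ specComplementZeroLocus A J)

lemma Module.HasBoundedTorsion.of_isScalarTower {A B M : Type*} [CommRing A] [CommRing B]
    [Algebra A B] [AddCommGroup M] [Module A M] [Module B M] [IsScalarTower A B M] {J : Ideal A}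
    (h : Module.HasBoundedTorsion A J M) :
    Module.HasBoundedTorsion B (J.map (algebraMap A B)) M := by
  obtain ⟨n, hn⟩ := h
  refine ⟨n, fun x ⟨k, hk⟩ => ?_⟩
  have hkA : ∀ a ∈ J ^ k, a • x = 0 := fun a ha => by
    rw [← algebraMap_smul B]
    exact hk _ (by rw [← Ideal.map_pow]; exact Ideal.mem_map_of_mem _ ha)
  suffices (J ^ n).map (algebraMap A B) ≤ LinearMap.ker (LinearMap.toSpanSingleton B M x) by
    rw [← Ideal.map_pow]
    exact fun b hb => this hb
  refine Ideal.map_le_iff_le_comap.mpr fun a ha => ?_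
  simp [algebraMap_smul, hn x ⟨k, hkA⟩ a ha]

lemma IsPseudoAdhesivePair.of_finite {A B : Type u} [CommRing A] [CommRing B] [Algebra A B]
    [Module.Finite A B] {J : Ideal A} (h : IsPseudoAdhesivePair A J) :
    IsPseudoAdhesivePair B (J.map (algebraMap A B)) where
  fg := h.fg.map _
  isNoetherian := isNoetherian_specComplementZeroLocus_map
    (RingHom.finiteType_algebraMap.mpr inferInstance) h.isNoetherian
  boundedTorsion M _ _ _ := by
    let : Module A M := Module.compHom M (algebraMap A B)
    have : IsScalarTower A B M := ⟨fun a b x => by rw [Algebra.smul_def]; exact mul_smul _ b x⟩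
    exact (h.boundedTorsion M (.trans B M)).of_isScalarTower

/-- Let `(R, I)` be a universally pseudo-adhesive pair and `S` a finite
type `R`-algebra. Then the pair `(S, I·S)` is universally pseudo-adhesive. -/
theorem isUnivPseudoAdhesivePair_of_finiteType
    (R : Type u) [CommRing R] (I : Ideal R) (hRI : IsUnivPseudoAdhesivePair R I)
    (S : Type u) [CommRing S] [Algebra R S] (hS : Algebra.FiniteType R S) :
    IsUnivPseudoAdhesivePair S (I.map (algebraMap R S)) := by
  intro d
  obtain ⟨m, g, hg⟩ := Algebra.FiniteType.iff_quotient_mvPolynomial''.mp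
    (Algebra.FiniteType.trans hS (inferInstance : Algebra.FiniteType S (MvPolynomial (Fin d) S)))
  let := g.toRingHom.toAlgebra
  have : Module.Finite (MvPolynomial (Fin m) R) (MvPolynomial (Fin d) S) :=
    RingHom.Finite.of_surjective _ hg
  have hI : (I.map MvPolynomial.C).map (algebraMap (MvPolynomial (Fin m) R) _) =
      (I.map (algebraMap R S)).map (MvPolynomial.C : S →+* MvPolynomial (Fin d) S) := by
    rw [Ideal.map_map, Ideal.map_map]
    congr 1
    exact RingHom.ext fun r => (g.commutes r).trans (IsScalarTower.algebraMap_apply R S _ r)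
  exact hI ▸ (hRI m).of_finite

end
end

section
/- Let (R, I) be a universally pseudo-adhesive pair and J ⊆ I a finitely generated ideal of R contained in I. Then the pair (R, J) is universally pseudo-adhesive. -/
open CategoryTheory AlgebraicGeometry Opposite Limits

universe w v u

set_option maxHeartbeats 1000000
set_option synthInstance.maxHeartbeats 400000

noncomputable section

/-!
Shrinking the ideal shrinks the open set `Spec A ∖ V(I)`, and an open subscheme of a noetherian
scheme is noetherian; since `J ≤ I` gives `J·A[X] ≤ I·A[X]`, it suffices to pass from a single
pseudo-adhesive pair `(A, I)` to `(A, J)`.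

For the torsion bound on a finite module `M`, write `I = (g₁, …, g_r)`. Each `A_{gᵢ}` is the ring
of an affine open of `Spec A ∖ V(I)`, hence noetherian, so the `J`-power torsion of `M_{gᵢ}` is
killed by a fixed power `J^m`. Thus `J^m` maps the `J`-power torsion of `M` into the `I`-power
torsion, which is killed by `I^n ⊇ J^n`; so `J^(n + m)` kills all `J`-power torsion.
-/

lemma Module.hasBoundedTorsion_of_isNoetherian (R : Type u) [CommRing R] (I : Ideal R)
    (M : Type v) [AddCommGroup M] [Module R M] [IsNoetherian R M] :
    Module.HasBoundedTorsion R I M := by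
  let T : ℕ →o Submodule R M :=
    ⟨fun k => Submodule.torsionBySet R M ↑(I ^ k), fun _ _ hkl =>
      Submodule.torsionBySet_le_torsionBySet_of_subset (Ideal.pow_le_pow_right hkl)⟩
  obtain ⟨n, hn⟩ := monotone_stabilizes_iff_noetherian.mpr ‹IsNoetherian R M› T
  refine ⟨n, fun x ⟨k, hk⟩ => ?_⟩
  have hx : x ∈ T (max k n) :=
    T.monotone (le_max_left k n) ((Submodule.mem_torsionBySet_iff _ _).mpr fun a => hk a a.2)
  rw [← hn _ (le_max_right k n)] at hx
  exact fun a ha => (Submodule.mem_torsionBySet_iff _ _).mp hx ⟨a, ha⟩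

lemma Ideal.exists_pow_span_le_torsionOf {R : Type u} [CommRing R] {M : Type v}
    [AddCommGroup M] [Module R M] {s : Set R} (hs : s.Finite) {x : M}
    (h : ∀ g ∈ s, ∃ e : ℕ, g ^ e • x = 0) :
    ∃ k : ℕ, Ideal.span s ^ k ≤ Ideal.torsionOf R M x := by
  refine Ideal.exists_pow_le_of_le_radical_of_fg (Ideal.span_le.mpr fun g hg => ?_)
    (Submodule.fg_span hs)
  obtain ⟨e, he⟩ := h g hg
  exact ⟨e, (Ideal.mem_torsionOf_iff _ _).mpr he⟩

lemma Module.exists_pow_smul_eq_zero_of_isNoetherianRing_away {R : Type u} [CommRing R]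
    {g : R} [IsNoetherianRing (Localization.Away g)] (J : Ideal R)
    (M : Type v) [AddCommGroup M] [Module R M] [Module.Finite R M] :
    ∃ m : ℕ, ∀ x : M, (∃ k : ℕ, ∀ a ∈ J ^ k, a • x = 0) →
      ∀ a ∈ J ^ m, ∃ e : ℕ, g ^ e • a • x = 0 := by
  let S := Submonoid.powers g
  let ι := LocalizedModule.mkLinearMap S M
  have : Module.Finite (Localization.Away g) (LocalizedModule S M) :=
    Module.Finite.of_isLocalizedModule S ι
  have : IsNoetherian (Localization.Away g) (LocalizedModule S M) :=
    isNoetherian_of_isNoetherianRing_of_finite _ _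
  have hι (a : R) (x : M) : algebraMap R (Localization.Away g) a • ι x = ι (a • x) := by
    rw [algebraMap_smul, map_smul]
  have hmap (k : ℕ) {a : R} (ha : a ∈ J ^ k) :
      algebraMap R (Localization.Away g) a ∈ J.map (algebraMap R (Localization.Away g)) ^ k := by
    rw [← Ideal.map_pow]
    exact Ideal.mem_map_of_mem _ ha
  obtain ⟨m, hm⟩ := hasBoundedTorsion_of_isNoetherian _
    (J.map (algebraMap R (Localization.Away g))) (LocalizedModule S M)
  refine ⟨m, fun x ⟨k, hk⟩ a ha => ?_⟩
  have hkx : ∃ k : ℕ, ∀ b ∈ J.map (algebraMap R (Localization.Away g)) ^ k, b • ι x = 0 := by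
    refine ⟨k, fun b hb => (Ideal.mem_torsionOf_iff _ _).mp ?_⟩
    rw [← Ideal.map_pow] at hb
    refine Ideal.map_le_iff_le_comap.mpr (fun a ha => ?_) hb
    rw [Ideal.mem_comap, Ideal.mem_torsionOf_iff, hι, hk a ha, map_zero]
  have hax : ι (a • x) = 0 := hι a x ▸ hm _ hkx _ (hmap m ha)
  obtain ⟨⟨_, e, rfl⟩, he⟩ := (IsLocalizedModule.eq_zero_iff S ι).mp hax
  exact ⟨e, he⟩

lemma AlgebraicGeometry.isNoetherian_of_isOpenImmersion {X Y : Scheme} (f : X ⟶ Y)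
    [IsOpenImmersion f] [IsNoetherian Y] : IsNoetherian X :=
  have := isLocallyNoetherian_of_isOpenImmersion f
  have := f.isOpenEmbedding.isInducing.noetherianSpace
  ⟨⟩

lemma AlgebraicGeometry.isNoetherianRing_of_isAffineOpen_of_le {X : Scheme.{u}}
    {U V : X.Opens} [IsLocallyNoetherian U] (hV : IsAffineOpen V) (hVU : V ≤ U) :
    IsNoetherianRing Γ(X, V) :=
  have := isLocallyNoetherian_of_isOpenImmersion (X.homOfLE hVU)
  have : IsAffine V := hV
  have := IsLocallyNoetherian.component_noetherian ⟨⊤, isAffineOpen_top V⟩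
  isNoetherianRing_of_ringEquiv _ (Scheme.Opens.topIso V).commRingCatIsoToRingEquiv

lemma AlgebraicGeometry.isNoetherianRing_away_of_basicOpen_le {R : CommRingCat.{u}}
    {U : (Spec R).Opens} [IsLocallyNoetherian U] {g : R} (hg : PrimeSpectrum.basicOpen g ≤ U) :
    IsNoetherianRing (Localization.Away g) := by
  let D : (Spec R).Opens := PrimeSpectrum.basicOpen g
  have := isNoetherianRing_of_isAffineOpen_of_le (IsAffineOpen.Spec_basicOpen g) hg
  exact isNoetherianRing_of_ringEquiv Γ(Spec R, D)
    (IsLocalization.algEquiv (.powers g) _ (Localization.Away g)).toRingEquiv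

lemma specComplementZeroLocus_mono {A : Type u} [CommRing A] {I J : Ideal A} (h : J ≤ I) :
    specComplementZeroLocus A J ≤ specComplementZeroLocus A I :=
  fun _ hx hI => hx (PrimeSpectrum.zeroLocus_anti_mono (by exact_mod_cast h) hI)

lemma basicOpen_le_specComplementZeroLocus {A : Type u} [CommRing A] {I : Ideal A} {g : A}
    (hg : g ∈ I) : PrimeSpectrum.basicOpen g ≤ specComplementZeroLocus A I :=
  fun _ hp hI => hp (hI hg)

namespace IsPseudoAdhesivePair

variable {A : Type u} [CommRing A] {I J : Ideal A}

lemma isNoetherian_of_le (hI : IsPseudoAdhesivePair A I) (hJI : J ≤ I) :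
    IsNoetherian (specComplementZeroLocus A J).toScheme :=
  have := hI.isNoetherian
  isNoetherian_of_isOpenImmersion ((Spec _).homOfLE (specComplementZeroLocus_mono hJI))

lemma hasBoundedTorsion_of_le (hI : IsPseudoAdhesivePair A I) (hJI : J ≤ I)
    (M : Type u) [AddCommGroup M] [Module A M] [Module.Finite A M] :
    Module.HasBoundedTorsion A J M := by
  have := hI.isNoetherian
  obtain ⟨nI, hnI⟩ := hI.boundedTorsion M ‹_›
  obtain ⟨s, rfl⟩ := hI.fg
  have hloc (g : s) : ∃ m : ℕ, ∀ x : M, (∃ k : ℕ, ∀ a ∈ J ^ k, a • x = 0) →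
      ∀ a ∈ J ^ m, ∃ e : ℕ, (g : A) ^ e • a • x = 0 :=
    have := isNoetherianRing_away_of_basicOpen_le (R := CommRingCat.of A)
      (basicOpen_le_specComplementZeroLocus (Ideal.subset_span g.2))
    Module.exists_pow_smul_eq_zero_of_isNoetherianRing_away J M
  choose m hm using hloc
  refine ⟨nI + Finset.univ.sup m, fun x hx => ?_⟩
  suffices J ^ nI * J ^ Finset.univ.sup m ≤ Ideal.torsionOf A M x by
    intro a ha
    rw [pow_add] at ha
    exact (Ideal.mem_torsionOf_iff _ _).mp (this ha)
  refine Ideal.mul_le.mpr fun b hb a ha => ?_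
  have hgax (g : A) (hg : g ∈ s) : ∃ e : ℕ, g ^ e • a • x = 0 :=
    hm ⟨g, hg⟩ x hx a (Ideal.pow_le_pow_right (Finset.le_sup (f := m) (Finset.mem_univ _)) ha)
  obtain ⟨k, hk⟩ := Ideal.exists_pow_span_le_torsionOf s.finite_toSet hgax
  rw [Ideal.mem_torsionOf_iff, mul_smul]
  exact hnI (a • x) ⟨k, fun c hc => (Ideal.mem_torsionOf_iff _ _).mp (hk hc)⟩ b
    (Ideal.pow_right_mono hJI nI hb)

lemma of_le (hI : IsPseudoAdhesivePair A I) (hJ : J.FG) (hJI : J ≤ I) :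
    IsPseudoAdhesivePair A J :=
  ⟨hJ, hI.isNoetherian_of_le hJI, fun M _ _ _ => hI.hasBoundedTorsion_of_le hJI M⟩

end IsPseudoAdhesivePair

/-- Let `(R, I)` be a universally pseudo-adhesive pair and `J ⊆ I` a
finitely generated ideal contained in `I`. Then `(R, J)` is universally pseudo-adhesive. -/
theorem isUnivPseudoAdhesivePair_of_le
    (R : Type u) [CommRing R] (I : Ideal R) (hRI : IsUnivPseudoAdhesivePair R I)
    (J : Ideal R) (hJ : J.FG) (hJI : J ≤ I) :
    IsUnivPseudoAdhesivePair R J := fun d =>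
  (hRI d).of_le (hJ.map _) (Ideal.map_mono hJI)

end
end
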